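/- arXiv:1901.07809 — 4 statements merged into one kernel-verified Lean document; each statement's English description precedes it below -/
import Mathlib

section
/- Let N ≥ 1 and let M : Fin (2N) → Fin (2N) be a fixed-point-free involution (a perfect matching on the numbers, where M x is called the partner of x). Suppose Alice declares numbers a₁, a₂, …, a_t and Bob plays the mirror strategy, declaring b_s = M(a_s) after each a_s. If the numbers a₁, b₁, a₂, b₂, …, a_{t-1}, b_{t-1}, a_t are pairwise distinct (no player has repeated a number so far), then Bob's next declaration b_t = M(a_t) is distinct from all of a₁, b₁, …, a_{t-1}, b_{t-1}, a_t. In particular, Bob playing the mirror strategy never repeats a previously declared number as long as Alice has not repeated one. -/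
/-- Mirror game: if Alice declares `a 0, a 1, …, a (t-1)` (0-indexed) and Bob
plays the mirror strategy (declaring `M (a s)` after each `a s`), and the
sequence `a 0, M (a 0), …, a (t-2), M (a (t-2)), a (t-1)` of declared numbers
is pairwise distinct, then Bob's next declaration `M (a (t-1))` is distinct
from all previously declared numbers. -/
theorem mirror_strategy_no_repeat
    (N t : ℕ) (hN : 1 ≤ N) (ht : 1 ≤ t)
    (M : Fin (2 * N) → Fin (2 * N))
    (hinv : ∀ x, M (M x) = x) (hfree : ∀ x, M x ≠ x)
    (a : ℕ → Fin (2 * N))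
    (haa : ∀ i j, i < t → j < t → i ≠ j → a i ≠ a j)
    (hab : ∀ i j, i < t → j < t - 1 → a i ≠ M (a j))
    (hbb : ∀ i j, i < t - 1 → j < t - 1 → i ≠ j → M (a i) ≠ M (a j)) :
    (∀ i, i < t → M (a (t - 1)) ≠ a i) ∧
    (∀ j, j < t - 1 → M (a (t - 1)) ≠ M (a j)) := by
  constructor
  · intro i hi h
    rcases eq_or_ne i (t - 1) with rfl | hne
    · exact hfree _ h
    · have : a (t - 1) = M (a i) := by
        have := congrArg M h
        rw [hinv] at this
        exact this
      have hi' : i < t - 1 := by omega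
      exact hab (t - 1) i (Nat.sub_lt ht one_pos) hi' this
  · intro j hj h
    have : a (t - 1) = a j := by
      have := congrArg M h
      rwa [hinv, hinv] at this
    exact haa (t - 1) j (Nat.sub_lt ht one_pos) (lt_of_lt_of_le hj (Nat.sub_le t 1))
      (by omega) this
end

section
/- Let p be a prime and let m be a natural number with 1 ≤ m < p. Let T and T' be finite subsets of ZMod p with |T| = |T'| = m. If for every i with 1 ≤ i ≤ m one has Σ_{z ∈ T} z^i = Σ_{z ∈ T'} z^i in ZMod p, then T = T'. -/
/-!
Newton's identities `k eₖ = (-1)^(k+1) ∑_{i<k} (-1)^i eᵢ p_{k-i}` determine the elementary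
symmetric functions `e₁, …, eₘ` of a set from its power sums `p₁, …, pₘ` as long as
`1, …, m` are nonzero in a domain, which in `ZMod p` holds because `m < p`. A set of `m` elements
of a domain is the root set of `∏ (X - z) = ∑ (-1)^k eₖ X^(m-k)`, so it is determined by
`e₁, …, eₘ`.
-/

open Finset Polynomial

theorem Finset.mul_esymm_val_eq_sum {R : Type*} [CommRing R] (T : Finset R) (k : ℕ) :
    (k : R) * T.val.esymm k = (-1) ^ (k + 1) *
      ∑ a ∈ antidiagonal k with a.1 < k, (-1) ^ a.1 * T.val.esymm a.1 * ∑ z ∈ T, z ^ a.2 := by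
  have h := congrArg (MvPolynomial.aeval ((↑) : T → R)) (MvPolynomial.mul_esymm_eq_sum T R k)
  have hval : T.attach.val.map Subtype.val = T.val := Multiset.attach_map_val T.val
  have hsum (n : ℕ) : ∑ z ∈ T.attach, (z : R) ^ n = ∑ z ∈ T, z ^ n := sum_attach T (· ^ n)
  simpa only [map_mul, map_pow, map_neg, map_one, map_sum, map_natCast,
    MvPolynomial.aeval_esymm_eq_multiset_esymm, MvPolynomial.psum, MvPolynomial.aeval_X,
    univ_eq_attach, hval, hsum] using h

theorem Finset.esymm_val_eq_of_sum_pow_eq {R : Type*} [CommRing R] [IsDomain R]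
    {T T' : Finset R} {m : ℕ} (hm : ∀ k, 1 ≤ k → k ≤ m → (k : R) ≠ 0)
    (hsums : ∀ i, 1 ≤ i → i ≤ m → ∑ z ∈ T, z ^ i = ∑ z ∈ T', z ^ i) :
    ∀ k ≤ m, T.val.esymm k = T'.val.esymm k := by
  intro k
  induction k using Nat.strong_induction_on with
  | _ k ih =>
    intro hk
    rcases Nat.eq_zero_or_pos k with rfl | hk0
    · simp [Multiset.esymm]
    have hsame : ∀ a ∈ {a ∈ antidiagonal k | a.1 < k},
        (-1 : R) ^ a.1 * T.val.esymm a.1 * ∑ z ∈ T, z ^ a.2 =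
          (-1) ^ a.1 * T'.val.esymm a.1 * ∑ z ∈ T', z ^ a.2 := by
      intro a ha
      rw [mem_filter, HasAntidiagonal.mem_antidiagonal] at ha
      rw [ih a.1 ha.2 (by omega), hsums a.2 (by omega) (by omega)]
    apply mul_left_cancel₀ (hm k hk0 hk)
    rw [T.mul_esymm_val_eq_sum, T'.mul_esymm_val_eq_sum, sum_congr rfl hsame]

theorem Multiset.eq_of_card_eq_of_esymm_eq {R : Type*} [CommRing R] [IsDomain R]
    {s t : Multiset R} (hcard : card s = card t)
    (hesymm : ∀ k ≤ card s, s.esymm k = t.esymm k) : s = t := by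
  have hprod : (s.map fun a => X - C a).prod = (t.map fun a => X - C a).prod := by
    rw [prod_X_sub_X_eq_sum_esymm, prod_X_sub_X_eq_sum_esymm, ← hcard]
    refine sum_congr rfl fun k hk => ?_
    rw [hesymm k (Nat.lt_succ_iff.mp (mem_range.mp hk))]
  simpa only [roots_multiset_prod_X_sub_C] using congrArg roots hprod

theorem eq_of_power_sums_eq_zmod_general
    (p m : ℕ) (hp : p.Prime) (hmp : m < p)
    (T T' : Finset (ZMod p)) (hT : T.card = m) (hT' : T'.card = m)
    (hsums : ∀ i, 1 ≤ i → i ≤ m → ∑ z ∈ T, z ^ i = ∑ z ∈ T', z ^ i) :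
    T = T' := by
  have : Fact p.Prime := ⟨hp⟩
  have hk_ne_zero : ∀ k, 1 ≤ k → k ≤ m → (k : ZMod p) ≠ 0 := fun k hk1 hkm h =>
    absurd (Nat.le_of_dvd hk1 ((ZMod.natCast_eq_zero_iff k p).mp h)) (by omega)
  have hesymm := esymm_val_eq_of_sum_pow_eq hk_ne_zero hsums
  refine val_inj.mp (Multiset.eq_of_card_eq_of_esymm_eq ?_ ?_)
  · exact hT.trans hT'.symm
  · exact fun k hk => hesymm k (hk.trans_eq hT)

/-- For a prime `p` and `1 ≤ m < p`, an `m`-element subset of `ZMod p` is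
determined by its first `m` power sums. -/
theorem eq_of_power_sums_eq_zmod
    (p m : ℕ) (hp : p.Prime) (hm : 1 ≤ m) (hmp : m < p)
    (T T' : Finset (ZMod p)) (hT : T.card = m) (hT' : T'.card = m)
    (hsums : ∀ i, 1 ≤ i → i ≤ m → ∑ z ∈ T, z ^ i = ∑ z ∈ T', z ^ i) :
    T = T' :=
  eq_of_power_sums_eq_zmod_general p m hp hmp T T' hT hT' hsums
end

section
/- Let N ≥ 1, let p be a prime with 2N < p, let S be a subset of the integer interval [1, 2N], and let S' ⊆ S. Set k' = |S \ S'|. Then S \ S' is the unique subset T of S with |T| = k' satisfying, for every i with 1 ≤ i ≤ k', the congruence Σ_{z ∈ T} z^i ≡ Σ_{x ∈ S} x^i − Σ_{y ∈ S'} y^i (mod p). (Formally: a subset T ⊆ S satisfies |T| = k' and these k' congruences if and only if T = S \ S'.) -/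
/-!
Since `k = |S \ S'| ≤ 2N < p`, the numbers `1, …, k` are invertible mod `p`, so Newton's
identities recover the elementary symmetric functions of `S \ S'` mod `p` from its first `k`
power sums. These are the coefficients of `∏ (X - z)` over `ZMod p`, whose roots give back
`S \ S'` because its elements are distinct residues mod `p`.
-/

open Finset Polynomial

namespace Multiset

variable {R : Type*} [CommRing R]

theorem esymm_eq_zero_of_card_lt (s : Multiset R) {n : ℕ} (hn : card s < n) : s.esymm n = 0 := by
  rw [esymm, powersetCard_eq_empty _ hn, map_zero, sum_zero]

theorem mul_esymm_eq_sum (s : Multiset R) (k : ℕ) :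
    k * s.esymm k = (-1) ^ (k + 1) *
      ∑ a ∈ HasAntidiagonal.antidiagonal k with a.1 < k,
        (-1) ^ a.1 * s.esymm a.1 * (s.map (· ^ a.2)).sum := by
  classical
  have h := congrArg (MvPolynomial.aeval fun x : s ↦ (x : R))
    (MvPolynomial.mul_esymm_eq_sum s R k)
  simp only [map_mul, map_natCast, map_pow, map_neg, map_one, map_sum,
    MvPolynomial.aeval_esymm_eq_multiset_esymm, MvPolynomial.psum, MvPolynomial.aeval_X,
    Multiset.map_univ_coe] at h
  have hpsum (n : ℕ) : ∑ x : s, (x : R) ^ n = (s.map (· ^ n)).sum :=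
    congrArg Multiset.sum (Multiset.map_univ s (· ^ n))
  simpa only [hpsum] using h

variable [IsDomain R]

theorem esymm_eq_of_sum_map_pow_eq {s t : Multiset R} {k : ℕ} (hs : card s = k) (ht : card t = k)
    (hk : ∀ n ≤ k, n ≠ 0 → (n : R) ≠ 0)
    (hpow : ∀ i, 1 ≤ i → i ≤ k → (s.map (· ^ i)).sum = (t.map (· ^ i)).sum) (n : ℕ) :
    s.esymm n = t.esymm n := by
  induction n using Nat.strong_induction_on with
  | _ n ih =>
  rcases Nat.eq_zero_or_pos n with rfl | hn
  · simp [esymm]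
  rcases le_or_gt n k with hnk | hnk
  · refine mul_left_cancel₀ (hk n hnk hn.ne') ?_
    rw [mul_esymm_eq_sum, mul_esymm_eq_sum]
    congr 1
    refine sum_congr rfl fun a ha ↦ ?_
    obtain ⟨hsum, hlt⟩ : a.1 + a.2 = n ∧ a.1 < n := by simpa using ha
    rw [ih a.1 hlt, hpow a.2 (by omega) (by omega)]
  · rw [esymm_eq_zero_of_card_lt s (hs ▸ hnk), esymm_eq_zero_of_card_lt t (ht ▸ hnk)]

theorem eq_of_card_eq_of_esymm_eq_s4 {s t : Multiset R} (hc : card s = card t)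
    (h : ∀ n, s.esymm n = t.esymm n) : s = t := by
  rw [← roots_multiset_prod_X_sub_C s, ← roots_multiset_prod_X_sub_C t,
    prod_X_sub_X_eq_sum_esymm, prod_X_sub_X_eq_sum_esymm, hc]
  simp only [h]

theorem eq_of_card_eq_of_sum_map_pow_eq {s t : Multiset R} (hc : card s = card t)
    (hk : ∀ n ≤ card t, n ≠ 0 → (n : R) ≠ 0)
    (hpow : ∀ i, 1 ≤ i → i ≤ card t → (s.map (· ^ i)).sum = (t.map (· ^ i)).sum) :
    s = t :=
  eq_of_card_eq_of_esymm_eq_s4 hc (esymm_eq_of_sum_map_pow_eq hc rfl hk hpow)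

end Multiset

theorem Finset.eq_of_sum_natCast_pow_eq {p : ℕ} [Fact p.Prime] {T M : Finset ℕ}
    (hT : ∀ x ∈ T, x < p) (hM : ∀ x ∈ M, x < p) (hc : #T = #M) (hMp : #M < p)
    (hpow : ∀ i, 1 ≤ i → i ≤ #M →
      ∑ z ∈ T, (z : ZMod p) ^ i = ∑ z ∈ M, (z : ZMod p) ^ i) :
    T = M := by
  have hcast : T.val.map (Nat.cast : ℕ → ZMod p) = M.val.map Nat.cast := by
    refine Multiset.eq_of_card_eq_of_sum_map_pow_eq (by simpa using hc) ?_ ?_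
    · intro n hn hn0 hp
      rw [Multiset.card_map, ← Finset.card_def] at hn
      exact hn0 (Nat.eq_zero_of_dvd_of_lt ((ZMod.natCast_eq_zero_iff n p).mp hp) (by omega))
    · intro i hi1 hik
      simp only [Multiset.map_map, Function.comp_def]
      exact hpow i hi1 (by simpa only [Multiset.card_map, ← Finset.card_def] using hik)
  have val_map_cast : ∀ A : Finset ℕ, (∀ x ∈ A, x < p) →
      (A.val.map (Nat.cast : ℕ → ZMod p)).map ZMod.val = A.val := fun A hA ↦ by
    rw [Multiset.map_map]
    exact (Multiset.map_congr rfl fun x hx ↦ ZMod.val_cast_of_lt (hA x hx)).trans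
      (Multiset.map_id _)
  rw [← Finset.val_inj, ← val_map_cast T hT, ← val_map_cast M hM, hcast]

theorem missing_numbers_unique_general
    (N p : ℕ) (hp : p.Prime) (hpN : 2 * N < p)
    (S S' : Finset ℕ) (hS : S ⊆ Finset.Icc 1 (2 * N)) (hS' : S' ⊆ S) :
    ∀ T : Finset ℕ, T ⊆ S →
      ((T.card = (S \ S').card ∧
        ∀ i, 1 ≤ i → i ≤ (S \ S').card →
          (∑ z ∈ T, (z : ℤ) ^ i) ≡
            (∑ x ∈ S, (x : ℤ) ^ i) - (∑ y ∈ S', (y : ℤ) ^ i) [ZMOD (p : ℤ)])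
      ↔ T = S \ S') := by
  have : Fact p.Prime := ⟨hp⟩
  intro T hTS
  have hS_lt (x : ℕ) (hx : x ∈ S) : x < p := by
    have := mem_Icc.mp (hS hx)
    omega
  have hcard_lt : #(S \ S') < p :=
    calc #(S \ S') ≤ #S := card_le_card sdiff_subset
      _ ≤ #(Icc 1 (2 * N)) := card_le_card hS
      _ < p := by simpa using hpN
  simp_rw [← sum_sdiff_eq_sub hS', ← ZMod.intCast_eq_intCast_iff]
  push_cast
  constructor
  · rintro ⟨hcard, hpow⟩
    exact eq_of_sum_natCast_pow_eq (fun x hx ↦ hS_lt x (hTS hx))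
      (fun x hx ↦ hS_lt x (sdiff_subset hx)) hcard hcard_lt hpow
  · rintro rfl
    exact ⟨rfl, fun _ _ _ ↦ rfl⟩

/-- Missing numbers problem: for `S ⊆ [1, 2N]`, `S' ⊆ S` and a prime
`p > 2N`, the set `S \ S'` of missing numbers is the unique subset `T` of `S`
with `|T| = |S \ S'|` whose first `|S \ S'|` power sums are congruent mod `p`
to the differences of the power sums of `S` and of `S'`. -/
theorem missing_numbers_unique
    (N p : ℕ) (hN : 1 ≤ N) (hp : p.Prime) (hpN : 2 * N < p)
    (S S' : Finset ℕ) (hS : S ⊆ Finset.Icc 1 (2 * N)) (hS' : S' ⊆ S) :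
    ∀ T : Finset ℕ, T ⊆ S →
      ((T.card = (S \ S').card ∧
        ∀ i, 1 ≤ i → i ≤ (S \ S').card →
          (∑ z ∈ T, (z : ℤ) ^ i) ≡
            (∑ x ∈ S, (x : ℤ) ^ i) - (∑ y ∈ S', (y : ℤ) ^ i) [ZMOD (p : ℤ)])
      ↔ T = S \ S') :=
  missing_numbers_unique_general N p hp hpN S S' hS hS'
end

section
/- Let m and k be natural numbers with k + 1 ≤ m, and let B be a subset of Fin (2m) with |B| = m. Then the number of permutations σ of Fin (2m) such that σ(j) ∈ B for every position j with 2m − (k+1) ≤ j < 2m (i.e., σ maps each of the last k+1 positions into B) satisfies: this count multiplied by 2^(k+1) is at most (2m)!. In particular, under the uniform distribution on permutations of Fin (2m), the probability that all of the last k+1 positions are mapped into B is at most 2^{-(k+1)}, hence smaller than 2^{-k}. -/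
open Finset

/-- For `k + 1 ≤ m` and a set `B` of `m` of the `2m` positions' values, the
number of permutations of `Fin (2m)` mapping each of the last `k+1` positions
into `B`, multiplied by `2^(k+1)`, is at most `(2m)!`.  In particular, a
uniformly random permutation maps all of the last `k+1` positions into `B`
with probability at most `2^{-(k+1)} < 2^{-k}`. -/
theorem perm_last_in_bin_count
    (m k : ℕ) (hkm : k + 1 ≤ m)
    (B : Finset (Fin (2 * m))) (hB : B.card = m) :
    (Finset.univ.filter
        (fun σ : Equiv.Perm (Fin (2 * m)) =>
          ∀ j : Fin (2 * m), 2 * m - (k + 1) ≤ (j : ℕ) → σ j ∈ B)).card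
      * 2 ^ (k + 1) ≤ (2 * m).factorial := by
  classical
  -- the last `k+1` positions
  have hp' : ∀ i : Fin (k + 1), 2 * m - 1 - (i : ℕ) < 2 * m := by
    intro i; have := i.isLt; omega
  set p : Fin (k + 1) → Fin (2 * m) := fun i => ⟨2 * m - 1 - (i : ℕ), hp' i⟩ with hpdef
  have hpinj : Function.Injective p := by
    intro i j hij
    have hi := i.isLt; have hj := j.isLt
    have h2 : (2 * m - 1 - (i : ℕ)) = (2 * m - 1 - (j : ℕ)) := congrArg Fin.val hij
    exact Fin.ext (by omega)
  have hple : ∀ i : Fin (k + 1), 2 * m - (k + 1) ≤ (p i : ℕ) := by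
    intro i; have := i.isLt; simp only [p]; omega
  -- an involution swapping `B` and `Bᶜ`
  have hcard : B.card = (Bᶜ).card := by
    rw [Finset.card_compl, hB, Fintype.card_fin]; omega
  let e : (B : Finset (Fin (2 * m))) ≃ (Bᶜ : Finset (Fin (2 * m))) :=
    Finset.equivOfCardEq hcard
  let τ : Fin (2 * m) → Fin (2 * m) := fun x =>
    if h : x ∈ B then (e ⟨x, h⟩ : Fin (2 * m))
    else (e.symm ⟨x, Finset.mem_compl.2 h⟩ : Fin (2 * m))
  have hτ_mem : ∀ x, x ∈ B → τ x ∉ B := by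
    intro x hx
    have h1 : τ x = ↑(e ⟨x, hx⟩) := dif_pos hx
    rw [h1]
    exact Finset.mem_compl.1 (e ⟨x, hx⟩).2
  have hττ : ∀ x, τ (τ x) = x := by
    intro x
    by_cases hx : x ∈ B
    · have h1 : τ x = ↑(e ⟨x, hx⟩) := dif_pos hx
      have h2 : τ x ∉ B := hτ_mem x hx
      have h3 : τ (τ x) = ↑(e.symm ⟨τ x, Finset.mem_compl.2 h2⟩) := dif_neg h2
      have h4 : (⟨τ x, Finset.mem_compl.2 h2⟩ : (Bᶜ : Finset (Fin (2 * m)))) = e ⟨x, hx⟩ :=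
        Subtype.ext h1
      rw [h3, h4, Equiv.symm_apply_apply]
    · have h1 : τ x = ↑(e.symm ⟨x, Finset.mem_compl.2 hx⟩) := dif_neg hx
      have h2 : τ x ∈ B := by rw [h1]; exact (e.symm ⟨x, Finset.mem_compl.2 hx⟩).2
      have h3 : τ (τ x) = ↑(e ⟨τ x, h2⟩) := dif_pos h2
      have h4 : (⟨τ x, h2⟩ : (B : Finset (Fin (2 * m)))) = e.symm ⟨x, Finset.mem_compl.2 hx⟩ :=
        Subtype.ext h1
      rw [h3, h4, Equiv.apply_symm_apply]
  have hτinj : Function.Injective τ := fun a b h => by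
    rw [← hττ a, h, hττ]
  -- the flipping involution associated to a finset `A ⊆ B`
  let π : Finset (Fin (2 * m)) → Fin (2 * m) → Fin (2 * m) := fun A x =>
    if x ∈ A then τ x else if τ x ∈ A then τ x else x
  have hπinv : ∀ A : Finset (Fin (2 * m)), A ⊆ B → Function.Involutive (π A) := by
    intro A hA x
    by_cases hx : x ∈ A
    · have h2 : τ x ∉ A := fun hc => hτ_mem x (hA hx) (hA hc)
      have h3 : τ (τ x) ∈ A := by rw [hττ]; exact hx
      simp only [π, if_pos hx, if_neg h2, if_pos h3, hττ]
    · by_cases hx' : τ x ∈ A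
      · simp only [π, if_neg hx, if_pos hx', hττ, if_pos hx', hττ]
      · simp only [π, if_neg hx, if_neg hx']
    -- might need fixing
  -- the injection
  let Aq : Equiv.Perm (Fin (2 * m)) × (Fin (k + 1) → Bool) → Finset (Fin (2 * m)) :=
    fun q => ((Finset.univ.filter fun i => q.2 i = true).image fun i => q.1 (p i)) ∩ B
  have hAqB : ∀ q, Aq q ⊆ B := fun q => Finset.inter_subset_right
  let Φ : Equiv.Perm (Fin (2 * m)) × (Fin (k + 1) → Bool) → Equiv.Perm (Fin (2 * m)) :=
    fun q => q.1.trans ((hπinv (Aq q) (hAqB q)).toPerm)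
  have hΦapp : ∀ q x, Φ q x = π (Aq q) (q.1 x) := fun q x => rfl
  set F := (Finset.univ.filter
      (fun σ : Equiv.Perm (Fin (2 * m)) =>
        ∀ j : Fin (2 * m), 2 * m - (k + 1) ≤ (j : ℕ) → σ j ∈ B)) with hF
  have hmemF : ∀ σ, σ ∈ F → ∀ j : Fin (2 * m), 2 * m - (k + 1) ≤ (j : ℕ) → σ j ∈ B := by
    intro σ hσ; exact (Finset.mem_filter.1 hσ).2
  -- evaluation of Φ at the last positions
  have heval : ∀ q : Equiv.Perm (Fin (2 * m)) × (Fin (k + 1) → Bool), q.1 ∈ F →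
      ∀ i : Fin (k + 1),
        Φ q (p i) = if q.2 i = true then τ (q.1 (p i)) else q.1 (p i) := by
    intro q hq i
    have hσpB : q.1 (p i) ∈ B := hmemF q.1 hq (p i) (hple i)
    by_cases hε : q.2 i = true
    · have hmemA : q.1 (p i) ∈ Aq q := by
        refine Finset.mem_inter.2 ⟨?_, hσpB⟩
        exact Finset.mem_image.2 ⟨i, Finset.mem_filter.2 ⟨Finset.mem_univ _, hε⟩, rfl⟩
      rw [hΦapp, if_pos hε]
      simp only [π, if_pos hmemA]
    · have hnotA : q.1 (p i) ∉ Aq q := by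
        intro hc
        obtain ⟨i', hi', heq⟩ := Finset.mem_image.1 (Finset.mem_inter.1 hc).1
        have : i' = i := hpinj (q.1.injective heq)
        exact hε (this ▸ (Finset.mem_filter.1 hi').2)
      have hnotA' : τ (q.1 (p i)) ∉ Aq q := fun hc =>
        hτ_mem _ hσpB (hAqB q hc)
      rw [hΦapp, if_neg hε]
      simp only [π, if_neg hnotA, if_neg hnotA']
  have hmemB : ∀ q : Equiv.Perm (Fin (2 * m)) × (Fin (k + 1) → Bool), q.1 ∈ F →
      ∀ i : Fin (k + 1), (Φ q (p i) ∈ B ↔ q.2 i = false) := by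
    intro q hq i
    have hσpB : q.1 (p i) ∈ B := hmemF q.1 hq (p i) (hple i)
    rw [heval q hq i]
    cases hε : q.2 i
    · simp [hσpB]
    · simp [hτ_mem _ hσpB]
  -- injectivity
  have hinj : Set.InjOn Φ ↑(F ×ˢ (Finset.univ : Finset (Fin (k + 1) → Bool))) := by
    intro q1 hq1 q2 hq2 h
    have hq1F : q1.1 ∈ F := (Finset.mem_product.1 (Finset.mem_coe.1 hq1)).1
    have hq2F : q2.1 ∈ F := (Finset.mem_product.1 (Finset.mem_coe.1 hq2)).1
    have hε : q1.2 = q2.2 := by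
      funext i
      have h1 := hmemB q1 hq1F i
      have h2 := hmemB q2 hq2F i
      rw [h] at h1
      have hiff : (q1.2 i = false) ↔ (q2.2 i = false) := h1.symm.trans h2
      cases hb1 : q1.2 i <;> cases hb2 : q2.2 i
      · rfl
      · exact absurd (hiff.1 hb1) (by simp [hb2])
      · exact absurd (hiff.2 hb2) (by simp [hb1])
      · rfl
    have hσeq : ∀ i : Fin (k + 1), q1.2 i = true → q1.1 (p i) = q2.1 (p i) := by
      intro i hi
      have h1 := heval q1 hq1F i
      have h2 := heval q2 hq2F i
      rw [if_pos hi] at h1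
      rw [if_pos (hε ▸ hi : q2.2 i = true)] at h2
      have : (Φ q1) (p i) = (Φ q2) (p i) := by rw [h]
      rw [h1, h2] at this
      exact hτinj this
    have hAset : Aq q1 = Aq q2 := by
      simp only [Aq]
      congr 1
      rw [← hε]
      apply Finset.image_congr
      intro i hi
      simp only [Finset.coe_filter, Set.mem_setOf_eq] at hi
      exact hσeq i hi.2
    have hσ : q1.1 = q2.1 := by
      apply Equiv.ext
      intro x
      have e1 : π (Aq q1) (Φ q1 x) = q1.1 x := by
        rw [hΦapp]; exact hπinv (Aq q1) (hAqB q1) (q1.1 x)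
      have e2 : π (Aq q2) (Φ q2 x) = q2.1 x := by
        rw [hΦapp]; exact hπinv (Aq q2) (hAqB q2) (q2.1 x)
      rw [← e1, ← e2, h, hAset]
    exact Prod.ext hσ hε
  calc F.card * 2 ^ (k + 1)
      = (F ×ˢ (Finset.univ : Finset (Fin (k + 1) → Bool))).card := by
        rw [Finset.card_product, Finset.card_univ]
        congr 1
        simp [Fintype.card_fun]
    _ ≤ (Finset.univ : Finset (Equiv.Perm (Fin (2 * m)))).card :=
        Finset.card_le_card_of_injOn Φ (fun _ _ => Finset.mem_univ _) hinj
    _ = (2 * m).factorial := by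
        rw [Finset.card_univ, Fintype.card_perm, Fintype.card_fin]
end
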